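/- Let A be a symmetric positive definite real 3×3 matrix, u ∈ ℝ³ a unit vector, γ > 0, and Θ a nonempty finite set of reals. Let c_ψ := 2λ_M^Ā, and let 0 < δ' < δ and 0 < ϱ < (δ − δ')/c_ψ². Define W(R,θ,ζ) := U(R,θ) + ϱ‖ζ − Ra(θ,u)·ψ(A·T(R,θ))‖² for ζ ∈ ℝ³. If v is a unit eigenvector of A such that U(Ra(π,v),0) − min_{θ'∈Θ} U(Ra(π,v),θ') > δ, then W(Ra(π,v),0,0) − min_{θ'∈Θ} W(Ra(π,v),θ',0) > δ'. -/

import Mathlib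

open Matrix

noncomputable section

abbrev M3 : Type := Matrix (Fin 3) (Fin 3) ℝ
abbrev V3 : Type := Fin 3 → ℝ

/-- skew-symmetric matrix associated to `x`: `skew x *ᵥ y = x ×₃ y`. -/
def skew (x : V3) : M3 :=
  !![0, -x 2, x 1; x 2, 0, -x 0; -x 1, x 0, 0]

/-- the special orthogonal group SO(3) as a subset of 3×3 matrices -/
def SO3 : Set M3 := {R | Rᵀ * R = 1 ∧ R.det = 1}

/-- Rodrigues formula -/
def Ra (θ : ℝ) (u : V3) : M3 :=
  1 + Real.sin θ • skew u + (1 - Real.cos θ) • (skew u * skew u)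

/-- `psi M = vec (P_a M)`, the vector part of the antisymmetric projection -/
def psi (M : M3) : V3 :=
  ![(M 2 1 - M 1 2) / 2, (M 0 2 - M 2 0) / 2, (M 1 0 - M 0 1) / 2]

/-- the angular-warping transformation `T(R,θ) = R · Ra(θ,u)` -/
def Tmap (u : V3) (R : M3) (θ : ℝ) : M3 := R * Ra θ u

/-- the potential function `U(R,θ)` on SO(3) × ℝ -/
def Ufun (A : M3) (u : V3) (γ : ℝ) (R : M3) (θ : ℝ) : ℝ :=
  (A * (1 - Tmap u R θ)).trace + γ / 2 * θ ^ 2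

/-- Euclidean norm on ℝ³ -/
def enorm3 (x : V3) : ℝ := Real.sqrt (x ⬝ᵥ x)

/-- Frobenius norm of a 3×3 matrix -/
def fnorm (M : M3) : ℝ := Real.sqrt ((Mᵀ * M).trace)

/-- `E(M) := (tr(M) I − Mᵀ)/2` -/
def Emap (M : M3) : M3 := (2⁻¹ : ℝ) • (M.trace • (1 : M3) - Mᵀ)

/-- `D_R(R,θ)` from Lemma 2 -/
def DR (A : M3) (u : V3) (R : M3) (θ : ℝ) : M3 :=
  Ra θ u * Emap (A * Tmap u R θ) * (Ra θ u)ᵀ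

/-- `D_θ(R,θ)` from Lemma 2 -/
def Dθ (A : M3) (u : V3) (R : M3) (θ : ℝ) : V3 :=
  (Ra θ u * Emap (A * Tmap u R θ)) *ᵥ u - skew (Ra θ u *ᵥ psi (A * Tmap u R θ)) *ᵥ u

/-- Δ(v,u) from the construction of the synergistic gap -/
def Delta (A : M3) (v u : V3) : ℝ :=
  u ⬝ᵥ ((A.trace • (1 : M3) - A - (2 * (v ⬝ᵥ A *ᵥ v)) • ((1 : M3) - vecMulVec v v)) *ᵥ u)

/-- `v` is a unit eigenvector of `A` -/
def IsUnitEigen (A : M3) (v : V3) : Prop :=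
  v ⬝ᵥ v = 1 ∧ ∃ lam : ℝ, A *ᵥ v = lam • v

/-- Ā := (tr(A) I − A)/2 -/
def Abar (A : M3) : M3 := (2⁻¹ : ℝ) • (A.trace • (1 : M3) - A)

/-- `lam` is an eigenvalue of `M` -/
def IsEigen (M : M3) (lam : ℝ) : Prop := ∃ w : V3, w ≠ 0 ∧ M *ᵥ w = lam • w

/-!
The penalty term of `W` is nonnegative, so `W (R, 0, 0) ≥ U (R, 0)`. At `ζ = 0` it equals
`ϱ ‖Ra(θ,u) ψ(A T)‖² = ϱ ‖ψ(A T)‖²`, and `‖ψ(M)‖² ≤ ‖M‖_F² / 2`, while `‖A T‖_F = ‖A‖_F` for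
orthogonal `T`. With eigenvalues `λ₁ ≥ λ₂ ≥ λ₃ > 0` of `A`, the top eigenvalue of `Ā` is
`(λ₁ + λ₂) / 2`, so `‖A‖_F² / 2 ≤ (λ₁ + λ₂)² = c_ψ²`. Hence `min W ≤ min U + ϱ c_ψ²` over `Θ`,
and `ϱ c_ψ² < δ - δ'` turns the gap `δ` of `U` into the gap `δ'` of `W`.
-/

theorem skew_transpose (x : V3) : (skew x)ᵀ = -skew x := by
  ext i j
  fin_cases i <;> fin_cases j <;> simp [skew]

theorem skew_mul_skew_mul_skew (x : V3) : skew x * skew x * skew x = -(x ⬝ᵥ x) • skew x := by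
  ext i j
  fin_cases i <;> fin_cases j <;>
    simp [skew, Matrix.mul_apply, dotProduct, Fin.sum_univ_three] <;> ring

theorem Ra_transpose_mul_self (θ : ℝ) {u : V3} (hu : u ⬝ᵥ u = 1) : (Ra θ u)ᵀ * Ra θ u = 1 := by
  set K := skew u
  set s := Real.sin θ
  set c := 1 - Real.cos θ
  have hK4 : K * K * (K * K) = -(K * K) := by
    rw [← mul_assoc, skew_mul_skew_mul_skew, hu, neg_smul, one_smul, neg_mul]
  have hR : Ra θ u = 1 + s • K + c • (K * K) := rfl
  have hRt : (Ra θ u)ᵀ = 1 - s • K + c • (K * K) := by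
    rw [hR, transpose_add, transpose_add, transpose_smul, transpose_smul, transpose_one,
      transpose_mul, skew_transpose, neg_mul_neg]
    module
  calc (Ra θ u)ᵀ * Ra θ u
      = 1 + (2 * c - s ^ 2) • (K * K) + c ^ 2 • (K * K * (K * K)) := by
        rw [hRt, hR]
        simp only [add_mul, sub_mul, mul_add, smul_mul_assoc, mul_smul_comm, one_mul, mul_one,
          mul_assoc]
        module
    _ = 1 + (2 * c - s ^ 2 - c ^ 2) • (K * K) := by rw [hK4]; module
    _ = 1 := by
        have hcoef : 2 * c - s ^ 2 - c ^ 2 = 0 := by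
          linear_combination -Real.sin_sq_add_cos_sq θ
        rw [hcoef, zero_smul, add_zero]

section RealSquareMatrix

variable {n : Type*} [Fintype n] [DecidableEq n]

theorem dotProduct_mulVec_self_of_transpose_mul_self {R : Matrix n n ℝ} (hR : Rᵀ * R = 1)
    (x : n → ℝ) : (R *ᵥ x) ⬝ᵥ (R *ᵥ x) = x ⬝ᵥ x := by
  rw [← dotProduct_transpose_mulVec, mulVec_mulVec, hR, one_mulVec]

theorem trace_transpose_mul_self_mul_of_transpose_mul_self (A : Matrix n n ℝ) {T : Matrix n n ℝ}
    (hT : Tᵀ * T = 1) : ((A * T)ᵀ * (A * T)).trace = (Aᵀ * A).trace := by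
  rw [transpose_mul, Matrix.mul_assoc, trace_mul_comm, Matrix.mul_assoc, Matrix.mul_assoc,
    mul_eq_one_comm.mp hT, Matrix.mul_one]

theorem Matrix.IsHermitian.trace_mul_self_eq_sum_sq {A : Matrix n n ℝ} (hA : A.IsHermitian) :
    (A * A).trace = ∑ i, hA.eigenvalues i ^ 2 := by
  conv_lhs => rw [hA.spectral_theorem, ← map_mul, Unitary.conjStarAlgAut_apply, trace_mul_cycle,
    Unitary.coe_star_mul_self, one_mul, diagonal_mul_diagonal, trace_diagonal]
  simp [sq]

end RealSquareMatrix

theorem psi_dotProduct_self_le (M : M3) : psi M ⬝ᵥ psi M ≤ (1 / 2) * (Mᵀ * M).trace := by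
  simp only [psi, dotProduct, Fin.sum_univ_three, trace, diag, mul_apply, transpose_apply,
    cons_val_zero, cons_val_one, cons_val_two, head_cons, tail_cons]
  nlinarith [sq_nonneg (M 2 1 + M 1 2), sq_nonneg (M 0 2 + M 2 0), sq_nonneg (M 1 0 + M 0 1),
    sq_nonneg (M 0 0), sq_nonneg (M 1 1), sq_nonneg (M 2 2)]

theorem Ra_mulVec_psi_dotProduct_self_le (A : M3) {R : M3} (hR : Rᵀ * R = 1) {u : V3}
    (hu : u ⬝ᵥ u = 1) (θ : ℝ) :
    (Ra θ u *ᵥ psi (A * Tmap u R θ)) ⬝ᵥ (Ra θ u *ᵥ psi (A * Tmap u R θ)) ≤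
      (1 / 2) * (Aᵀ * A).trace := by
  have hT : (Tmap u R θ)ᵀ * Tmap u R θ = 1 := by
    rw [Tmap, transpose_mul, Matrix.mul_assoc, ← Matrix.mul_assoc Rᵀ, hR, Matrix.one_mul,
      Ra_transpose_mul_self θ hu]
  rw [dotProduct_mulVec_self_of_transpose_mul_self (Ra_transpose_mul_self θ hu),
    ← trace_transpose_mul_self_mul_of_transpose_mul_self A hT]
  exact psi_dotProduct_self_le _

theorem Abar_mulVec_of_mulVec_eq_smul {A : M3} {w : V3} {μ : ℝ} (hw : A *ᵥ w = μ • w) :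
    Abar A *ᵥ w = ((A.trace - μ) / 2) • w := by
  rw [Abar, smul_mulVec, sub_mulVec, smul_mulVec, one_mulVec, hw]
  module

theorem half_sum_sq_le_sq_of_pairwise_add_le {a b c m : ℝ} (ha : 0 < a) (hb : 0 < b) (hc : 0 < c)
    (hab : a + b ≤ m) (hac : a + c ≤ m) : (a ^ 2 + b ^ 2 + c ^ 2) / 2 ≤ m ^ 2 := by
  nlinarith [mul_pos ha hb, mul_pos ha hc, mul_pos hb hc]

theorem half_trace_transpose_mul_self_le {A : M3} (hA : A.PosDef) {lamM : ℝ}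
    (hbound : ∀ lam : ℝ, IsEigen (Abar A) lam → lam ≤ lamM) :
    (1 / 2) * (Aᵀ * A).trace ≤ (2 * lamM) ^ 2 := by
  have hH : A.IsHermitian := hA.isHermitian
  set lam := hH.eigenvalues
  have htrace : A.trace = lam 0 + lam 1 + lam 2 := by
    simpa [Fin.sum_univ_three] using hH.trace_eq_sum_eigenvalues
  -- `tr A - λᵢ`, the sum of the other two eigenvalues, is twice an eigenvalue of `Ā`
  have hcompl : ∀ i, A.trace - lam i ≤ 2 * lamM := fun i => by
    have hw_ne : (hH.eigenvectorBasis i : V3) ≠ 0 := fun h =>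
      hH.eigenvectorBasis.orthonormal.ne_zero i (by ext j; exact congrFun h j)
    have := hbound _ ⟨_, hw_ne, Abar_mulVec_of_mulVec_eq_smul (hH.mulVec_eigenvectorBasis i)⟩
    linarith
  have hAt : Aᵀ = A := by rw [← conjTranspose_eq_transpose_of_trivial, hH]
  rw [hAt, hH.trace_mul_self_eq_sum_sq, Fin.sum_univ_three, one_div_mul_eq_div]
  exact half_sum_sq_le_sq_of_pairwise_add_le (hA.eigenvalues_pos 0) (hA.eigenvalues_pos 1)
    (hA.eigenvalues_pos 2) (by linarith [hcompl 2]) (by linarith [hcompl 1])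

theorem Finset.inf'_le_inf'_add {ι β : Type*} [LinearOrder β] [Add β] {s : Finset ι}
    (hs : s.Nonempty) {f g : ι → β} {c : β} (hfg : ∀ i ∈ s, f i ≤ g i + c) :
    s.inf' hs f ≤ s.inf' hs g + c := by
  obtain ⟨i, hi, hgi⟩ := s.exists_mem_eq_inf' hs g
  rw [hgi]
  exact (s.inf'_le f hi).trans (hfg i hi)

theorem W_gap_general
    (A : M3) (hA : A.PosDef) (u : V3) (hu : u ⬝ᵥ u = 1) (γ : ℝ)
    (Θ : Finset ℝ) (hΘne : Θ.Nonempty)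
    (lamM : ℝ)
    (hbound : ∀ lam : ℝ, IsEigen (Abar A) lam → lam ≤ lamM)
    (cψ : ℝ) (hcψ : cψ = 2 * lamM)
    (δ δ' ϱ : ℝ) (hϱpos : 0 < ϱ)
    (hϱ : ϱ < (δ - δ') / cψ ^ 2)
    (W : M3 → ℝ → V3 → ℝ)
    (hW : ∀ (R : M3) (θ : ℝ) (ζ : V3), W R θ ζ = Ufun A u γ R θ +
        ϱ * ((ζ - Ra θ u *ᵥ psi (A * Tmap u R θ)) ⬝ᵥ (ζ - Ra θ u *ᵥ psi (A * Tmap u R θ))))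
    (v : V3) (hv : IsUnitEigen A v)
    (hgap : Ufun A u γ (Ra Real.pi v) 0 -
        Θ.inf' hΘne (fun θ' => Ufun A u γ (Ra Real.pi v) θ') > δ) :
    W (Ra Real.pi v) 0 0 - Θ.inf' hΘne (fun θ' => W (Ra Real.pi v) θ' 0) > δ' := by
  set R := Ra Real.pi v
  have hR : Rᵀ * R = 1 := Ra_transpose_mul_self _ hv.1
  have hresidual : ∀ θ, (0 - Ra θ u *ᵥ psi (A * Tmap u R θ)) ⬝ᵥ
      (0 - Ra θ u *ᵥ psi (A * Tmap u R θ)) ≤ cψ ^ 2 := fun θ => by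
    rw [zero_sub, neg_dotProduct_neg, hcψ]
    exact (Ra_mulVec_psi_dotProduct_self_le A hR hu θ).trans
      (half_trace_transpose_mul_self_le hA hbound)
  -- if `cψ = 0` then `hϱ` reads `ϱ < 0`, since `x / 0 = 0`
  have hcψ_sq : 0 < cψ ^ 2 :=
    (sq_nonneg cψ).lt_of_ne fun h => by rw [← h, div_zero] at hϱ; linarith
  have hϱcψ : ϱ * cψ ^ 2 < δ - δ' := (lt_div_iff₀ hcψ_sq).mp hϱ
  have hW0 : Ufun A u γ R 0 ≤ W R 0 0 := by
    rw [hW]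
    refine le_add_of_nonneg_right (mul_nonneg hϱpos.le ?_)
    exact Finset.sum_nonneg fun _ _ => mul_self_nonneg _
  have hWinf : Θ.inf' hΘne (fun θ => W R θ 0) ≤
      Θ.inf' hΘne (fun θ => Ufun A u γ R θ) + ϱ * cψ ^ 2 :=
    Finset.inf'_le_inf'_add hΘne fun θ _ => by
      rw [hW]
      have := mul_le_mul_of_nonneg_left (hresidual θ) hϱpos.le
      linarith
  linarith

theorem W_gap
    (A : M3) (hA : A.PosDef) (u : V3) (hu : u ⬝ᵥ u = 1) (γ : ℝ) (hγ : 0 < γ)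
    (Θ : Finset ℝ) (hΘne : Θ.Nonempty)
    (lamM : ℝ) (hM : IsEigen (Abar A) lamM)
    (hbound : ∀ lam : ℝ, IsEigen (Abar A) lam → lam ≤ lamM)
    (cψ : ℝ) (hcψ : cψ = 2 * lamM)
    (δ δ' ϱ : ℝ) (hδ'pos : 0 < δ') (hδδ' : δ' < δ) (hϱpos : 0 < ϱ)
    (hϱ : ϱ < (δ - δ') / cψ ^ 2)
    (W : M3 → ℝ → V3 → ℝ)
    (hW : ∀ (R : M3) (θ : ℝ) (ζ : V3), W R θ ζ = Ufun A u γ R θ +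
        ϱ * ((ζ - Ra θ u *ᵥ psi (A * Tmap u R θ)) ⬝ᵥ (ζ - Ra θ u *ᵥ psi (A * Tmap u R θ))))
    (v : V3) (hv : IsUnitEigen A v)
    (hgap : Ufun A u γ (Ra Real.pi v) 0 -
        Θ.inf' hΘne (fun θ' => Ufun A u γ (Ra Real.pi v) θ') > δ) :
    W (Ra Real.pi v) 0 0 - Θ.inf' hΘne (fun θ' => W (Ra Real.pi v) θ' 0) > δ' :=
  W_gap_general A hA u hu γ Θ hΘne lamM hbound cψ hcψ δ δ' ϱ hϱpos hϱ W hW v hv hgap
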